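/- arXiv:1503.04994 — 3 statements merged into one kernel-verified Lean document; each statement's English description precedes it below -/
import Mathlib

section
/- If {v1, v2} ∈ D_u and {v3, v4} ∈ D_u are double-vertex dominators of u such that {v3, v4} does not dominate v1 and {v1, v2} does not dominate v4, then {v1, v4} ∈ D_u and {v2, v3} ∈ D_u. -/
/-- A nonempty directed path `p` from `a` to `b` in the graph with edge relation `E`. -/
def IsPath {V : Type*} (E : V → V → Prop) (p : List V) (a b : V) : Prop :=
  p ≠ [] ∧ p.head? = some a ∧ p.getLast? = some b ∧ p.Chain' E

/-- `A` dominates `B` with respect to `root`: every path from a vertex of `B` to `root`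
contains a vertex of `A`. -/
def Dominates {V : Type*} (E : V → V → Prop) (root : V) (A B : Set V) : Prop :=
  ∀ b ∈ B, ∀ p : List V, IsPath E p b root → ∃ a ∈ A, a ∈ p

/-- `A` is a dominator of `B`: it dominates `B` and no proper subset `A \ {v}` does. -/
def IsDominator {V : Type*} (E : V → V → Prop) (root : V) (A B : Set V) : Prop :=
  Dominates E root A B ∧ ∀ v ∈ A, ¬ Dominates E root (A \ {v}) B

/-- `{v, w}` is a double-vertex dominator of `u`. -/
def DoubleDom {V : Type*} (E : V → V → Prop) (root : V) (u v w : V) : Prop :=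
  v ≠ w ∧ Dominates E root {v, w} {u} ∧
    ¬ Dominates E root {v} {u} ∧ ¬ Dominates E root {w} {u}

/-- The edge relation `E` is acyclic. -/
def Acyclic {V : Type*} (E : V → V → Prop) : Prop :=
  ∀ a b, E a b → ¬ Relation.ReflTransGen E b a

/-!
Call a vertex trapped if both `{v₁, v₂}` and `{v₃, v₄}` dominate it. On every path from `u` to
the root, the first vertex of `{v₁, v₂, v₃, v₄}` is trapped, since a path from it avoiding one pair
could be spliced into a path from `u` avoiding that pair. By hypothesis `v₁` and `v₄` are not
trapped, so every path from `u` meets `{v₂, v₃}`. If a path from `u` avoided `{v₁, v₄}`, its tail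
from the last vertex of `{v₂, v₃}` would show that `v₂` or `v₃` is not trapped either; then `{v₃}`
or `{v₂}` alone would dominate `u`, a contradiction.
-/

lemma List.exists_eq_append_cons_of_exists_mem {α : Type*} {P : α → Prop} {l : List α}
    (h : ∃ y ∈ l, P y) : ∃ s y t, l = s ++ y :: t ∧ P y ∧ ∀ z ∈ s, ¬ P z := by
  classical
  obtain ⟨y, hy⟩ := Option.isSome_iff_exists.1
    (List.find?_isSome (p := fun y => decide (P y)) (xs := l) |>.2 (by simpa using h))
  obtain ⟨hPy, s, t, rfl, hs⟩ := List.find?_eq_some_iff_append.1 hy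
  exact ⟨s, y, t, rfl, by simpa using hPy, fun z hz => by simpa using hs z hz⟩

namespace IsPath

variable {V : Type*} {E : V → V → Prop} {p q s t : List V} {a b c x : V}

lemma append_of_cons (hp : IsPath E (s ++ x :: t) a b) (hq : IsPath E q x c) :
    IsPath E (s ++ q) a c := by
  obtain ⟨-, hpa, -, hpE⟩ := hp
  obtain ⟨hq, hqx, hqc, hqE⟩ := hq
  refine ⟨by simp [hq], ?_, by rwa [List.getLast?_append_of_ne_nil _ hq], ?_⟩
  · cases s with
    | nil => simpa [hqx] using hpa
    | cons _ _ => simpa using hpa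
  · obtain ⟨hsE, -, hsx⟩ := List.isChain_append.1 hpE
    refine List.isChain_append.2 ⟨hsE, hqE, fun y hy z hz => ?_⟩
    rw [hqx, Option.mem_some_iff] at hz
    exact hz ▸ hsx y hy x rfl

lemma of_append_cons (hp : IsPath E (s ++ x :: t) a b) : IsPath E (x :: t) x b := by
  obtain ⟨-, -, hpb, hpE⟩ := hp
  refine ⟨List.cons_ne_nil _ _, rfl, ?_, ?_⟩
  · rwa [List.getLast?_append_of_ne_nil _ (List.cons_ne_nil _ _)] at hpb
  · exact (List.isChain_append.1 hpE).2.1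

lemma exists_last_mem (hp : IsPath E p a b) {T : Set V} (hT : ∃ y ∈ p, y ∈ T) :
    ∃ y ∈ T, ∃ q, IsPath E q y b ∧ (∀ z ∈ q, z ∈ p) ∧ ∀ z ∈ q, z ∈ T → z = y := by
  obtain ⟨s, y, t, hst, hy, hs⟩ :=
    List.exists_eq_append_cons_of_exists_mem (l := p.reverse) (by simpa using hT)
  rw [List.reverse_eq_append_iff, List.reverse_cons, List.append_assoc] at hst
  subst hst
  refine ⟨y, hy, y :: s.reverse, hp.of_append_cons, fun z hz => by simp_all, ?_⟩
  rintro z (_ | ⟨_, hz⟩) hzT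
  · rfl
  · exact absurd hzT (hs z (List.mem_reverse.1 hz))

end IsPath

section Domination

variable {V : Type*} {E : V → V → Prop} {root u : V} {A B S : Set V}

lemma not_dominates_singleton_iff :
    ¬ Dominates E root A {u} ↔ ∃ p, IsPath E p u root ∧ ∀ a ∈ A, a ∉ p := by
  simp [Dominates]

lemma exists_mem_dominated_by_both (hA : Dominates E root A {u})
    (hB : Dominates E root B {u}) {p : List V} (hp : IsPath E p u root) :
    ∃ t ∈ p, t ∈ A ∪ B ∧ Dominates E root A {t} ∧ Dominates E root B {t} := by
  obtain ⟨a, ha, hap⟩ := hA u rfl p hp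
  obtain ⟨s, t, r, rfl, ht, hs⟩ :=
    List.exists_eq_append_cons_of_exists_mem (P := (· ∈ A ∪ B)) ⟨a, hap, Or.inl ha⟩
  have dominates_first : ∀ C ⊆ A ∪ B, Dominates E root C {u} → Dominates E root C {t} := by
    rintro C hC hCu _ rfl q hq
    obtain ⟨c, hc, hcq⟩ := hCu u rfl _ (hp.append_of_cons hq)
    rcases List.mem_append.1 hcq with hcs | hcq
    · exact absurd (hC hc) (hs c hcs)
    · exact ⟨c, hc, hcq⟩
  exact ⟨t, by simp, ht, dominates_first A Set.subset_union_left hA,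
    dominates_first B Set.subset_union_right hB⟩

lemma dominates_of_dominated_by_both_subset (hA : Dominates E root A {u})
    (hB : Dominates E root B {u})
    (hS : ∀ t ∈ A ∪ B, Dominates E root A {t} → Dominates E root B {t} → t ∈ S) :
    Dominates E root S {u} := by
  rintro _ rfl p hp
  obtain ⟨t, htp, ht, htA, htB⟩ := exists_mem_dominated_by_both hA hB hp
  exact ⟨t, hS t ht htA htB, htp⟩

end Domination

theorem doubleDom_cross_general {V : Type*} (E : V → V → Prop) (root : V)
    (u v₁ v₂ v₃ v₄ : V)
    (h12 : DoubleDom E root u v₁ v₂) (h34 : DoubleDom E root u v₃ v₄)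
    (h1 : ¬ Dominates E root {v₃, v₄} {v₁})
    (h4 : ¬ Dominates E root {v₁, v₂} {v₄}) :
    DoubleDom E root u v₁ v₄ ∧ DoubleDom E root u v₂ v₃ := by
  obtain ⟨-, hA, hnd₁, hnd₂⟩ := h12
  obtain ⟨-, hB, hnd₃, hnd₄⟩ := h34
  have dominates_of_untrapped : ∀ S : Set V, (Dominates E root {v₃, v₄} {v₂} → v₂ ∈ S) →
      (Dominates E root {v₁, v₂} {v₃} → v₃ ∈ S) → Dominates E root S {u} := by
    refine fun S h₂ h₃ => dominates_of_dominated_by_both_subset hA hB ?_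
    rintro t ((rfl | rfl) | (rfl | rfl)) htA htB
    exacts [absurd htB h1, h₂ htB, h₃ htA, absurd htA h4]
  have hdom₂₃ : Dominates E root {v₂, v₃} {u} :=
    dominates_of_untrapped _ (fun _ => by simp) (fun _ => by simp)
  have h₂₃ : v₂ ≠ v₃ := by
    rintro rfl
    exact hnd₂ (by simpa using hdom₂₃)
  have hdom₁₄ : Dominates E root {v₁, v₄} {u} := by
    by_contra h
    obtain ⟨p, hp, hp₁₄⟩ := not_dominates_singleton_iff.1 h
    have hp₂ : v₂ ∈ p := by
      obtain ⟨_, rfl | rfl, hw⟩ := hA u rfl p hp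
      exacts [absurd hw (hp₁₄ _ (Or.inl rfl)), hw]
    obtain ⟨y, rfl | rfl, q, hq, hqp, hqT⟩ :=
      hp.exists_last_mem (T := {v₂, v₃}) ⟨v₂, hp₂, by simp⟩
    · refine hnd₃ (dominates_of_untrapped {v₃} (fun h => absurd h ?_) (fun _ => rfl))
      refine not_dominates_singleton_iff.2 ⟨q, hq, ?_⟩
      rintro _ (rfl | rfl) hz
      exacts [h₂₃ (hqT _ hz (by simp)).symm, hp₁₄ _ (by simp) (hqp _ hz)]
    · refine hnd₂ (dominates_of_untrapped {v₂} (fun _ => rfl) (fun h => absurd h ?_))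
      refine not_dominates_singleton_iff.2 ⟨q, hq, ?_⟩
      rintro _ (rfl | rfl) hz
      exacts [hp₁₄ _ (by simp) (hqp _ hz), h₂₃ (hqT _ hz (by simp))]
  have h₁₄ : v₁ ≠ v₄ := by
    rintro rfl
    exact hnd₁ (by simpa using hdom₁₄)
  exact ⟨⟨h₁₄, hdom₁₄, hnd₁, hnd₄⟩, ⟨h₂₃, hdom₂₃, hnd₂, hnd₃⟩⟩

theorem doubleDom_cross {V : Type*} [Fintype V] (E : V → V → Prop) (root : V)
    (hacyc : Acyclic E) (u v₁ v₂ v₃ v₄ : V)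
    (h12 : DoubleDom E root u v₁ v₂) (h34 : DoubleDom E root u v₃ v₄)
    (h1 : ¬ Dominates E root {v₃, v₄} {v₁})
    (h4 : ¬ Dominates E root {v₁, v₂} {v₄}) :
    DoubleDom E root u v₁ v₄ ∧ DoubleDom E root u v₂ v₃ :=
  doubleDom_cross_general E root u v₁ v₂ v₃ v₄ h12 h34 h1 h4
end

section
/- Uniqueness of the immediate double-vertex dominator: For any vertex u in a finite directed acyclic graph, if the set D_u of double-vertex dominators of u is non-empty, then there exists a unique double-vertex dominator D ∈ D_u such that D is dominated by every element of D_u; equivalently, u has a unique immediate double-vertex dominator. -/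
/-!
Order double-vertex dominators of `u` by domination. Any two of them, `P₁` and `P₂`, have a common
lower bound: the set `F` of vertices of `P₁ ∪ P₂` that `u` reaches first dominates `u` and is
dominated by both. Either `F` contains some `Pᵢ`, which is then the lower bound, or `F` meets each
`Pᵢ` in at most one vertex and, as no single vertex dominates `u`, is itself a double-vertex
dominator. Being finite, the set of double-vertex dominators then has a least element.

Acyclicity makes domination antisymmetric on double-vertex dominators. If `{s, t}` and `P`
dominate each other and `s ∉ P`, then `{t}` does not dominate `s`, and a path from `s` to the root
avoiding `t` never returns to `s`; it must meet `P`, at a vertex from which the root is reached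
avoiding `{s, t}`, contradicting that `{s, t}` dominates `P`.
-/

section

variable {V : Type*} {E : V → V → Prop} {root : V}

/-- `ReachAvoiding E A a b`: there is a path from `a` to `b` whose vertices, except possibly `a`,
lie outside `A`. -/
def ReachAvoiding (E : V → V → Prop) (A : Set V) : V → V → Prop :=
  Relation.ReflTransGen fun x y => E x y ∧ y ∉ A

namespace ReachAvoiding

variable {A B : Set V} {a b c : V}

theorem mono (hAB : A ⊆ B) (h : ReachAvoiding E B a b) : ReachAvoiding E A a b :=
  Relation.ReflTransGen.mono (fun _ _ hxy => ⟨hxy.1, fun hy => hxy.2 (hAB hy)⟩) _ _ h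

theorem trans (hab : ReachAvoiding E A a b) (hbc : ReachAvoiding E A b c) :
    ReachAvoiding E A a c :=
  Relation.ReflTransGen.trans hab hbc

theorem of_isPath {p : List V} (hp : IsPath E p a b) (hA : ∀ x ∈ p, x ∉ A) :
    ReachAvoiding E A a b := by
  obtain ⟨hne, hhead, hlast, hchain⟩ := hp
  have h := List.relationReflTransGen_of_exists_isChain (r := fun x y => E x y ∧ y ∉ A) p
    (List.IsChain.imp_of_mem_imp (fun _ y _ hy hxy => ⟨hxy, hA y hy⟩) hchain) hne
  rwa [Option.some.inj ((List.head?_eq_some_head hne).symm.trans hhead),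
    Option.some.inj ((List.getLast?_eq_some_getLast hne).symm.trans hlast)] at h

theorem exists_isPath (h : ReachAvoiding E A a b) (ha : a ∉ A) :
    ∃ p, IsPath E p a b ∧ ∀ x ∈ p, x ∉ A := by
  obtain ⟨l, hchain, hlast⟩ := List.exists_isChain_cons_of_relationReflTransGen h
  refine ⟨a :: l, ⟨List.cons_ne_nil _ _, rfl, ?_, hchain.imp fun _ _ hxy => hxy.1⟩, ?_⟩
  · rw [List.getLast?_eq_some_getLast (List.cons_ne_nil _ _), hlast]
  · exact hchain.induction (· ∉ A) _ (fun _ _ hxy _ => hxy.2) fun _ => ha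

theorem exists_first_hit (S : Set V) (h : ReachAvoiding E A a b) :
    ReachAvoiding E (A ∪ S) a b ∨
      ∃ d ∈ S, d ∉ A ∧ ReachAvoiding E ((A ∪ S) \ {d}) a d ∧ ReachAvoiding E A d b := by
  induction h with
  | refl => exact Or.inl Relation.ReflTransGen.refl
  | @tail c d _ hcd ih =>
    rcases ih with h | ⟨e, heS, heA, hae, hec⟩
    · by_cases hdS : d ∈ S
      · exact Or.inr ⟨d, hdS, hcd.2, (h.mono Set.sdiff_subset).tail ⟨hcd.1, by simp⟩,
          Relation.ReflTransGen.refl⟩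
      · exact Or.inl (h.tail ⟨hcd.1, by simp [hcd.2, hdS]⟩)
    · exact Or.inr ⟨e, heS, heA, hae, hec.tail hcd⟩

theorem insert_self (hacyc : Acyclic E) (h : ReachAvoiding E A a b) :
    ReachAvoiding E (insert a A) a b := by
  induction h with
  | refl => exact Relation.ReflTransGen.refl
  | @tail c d hac hcd ih =>
    refine ih.tail ⟨hcd.1, ?_⟩
    rintro (rfl | hdA)
    · exact hacyc c d hcd.1 (Relation.ReflTransGen.mono (fun _ _ hxy => hxy.1) _ _ hac)
    · exact hcd.2 hdA

end ReachAvoiding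

section Dominates

variable {A A' B B' C : Set V}

theorem dominates_iff :
    Dominates E root A B ↔ ∀ b ∈ B, b ∉ A → ¬ ReachAvoiding E A b root := by
  refine ⟨fun h b hb hbA hr => ?_, fun h b hb p hp => ?_⟩
  · obtain ⟨p, hp, hpA⟩ := hr.exists_isPath hbA
    obtain ⟨a, haA, hap⟩ := h b hb p hp
    exact hpA a hap haA
  · by_contra! hpA
    exact h b hb (fun hbA => hpA b hbA (List.mem_of_mem_head? (hp.2.1 ▸ rfl)))
      (ReachAvoiding.of_isPath hp fun x hx hxA => hpA x hxA hx)

theorem dominates_of_subset (h : B ⊆ A) : Dominates E root A B :=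
  fun b hb _ hp => ⟨b, h hb, List.mem_of_mem_head? (hp.2.1 ▸ rfl)⟩

theorem Dominates.mono_left (hA : A ⊆ A') (h : Dominates E root A B) : Dominates E root A' B :=
  fun b hb p hp => (h b hb p hp).imp fun _ ha => ⟨hA ha.1, ha.2⟩

theorem Dominates.mono_right (hB : B' ⊆ B) (h : Dominates E root A B) : Dominates E root A B' :=
  fun b hb => h b (hB hb)

theorem Dominates.insert {b : V} (hb : Dominates E root A {b}) (hB : Dominates E root A B) :
    Dominates E root A (insert b B) := by
  rintro x (rfl | hx)
  exacts [hb x rfl, hB x hx]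

theorem Dominates.trans (hAB : Dominates E root A B) (hBC : Dominates E root B C) :
    Dominates E root A C := by
  rw [dominates_iff] at hAB hBC ⊢
  intro c hc hcA hr
  by_cases hcB : c ∈ B
  · exact hAB c hcB hcA hr
  · rcases hr.exists_first_hit B with h | ⟨e, heB, heA, -, he⟩
    · exact hBC c hc hcB (h.mono Set.subset_union_right)
    · exact hAB e heB heA he

instance : IsTrans (Set V) (Dominates E root) := ⟨fun _ _ _ => Dominates.trans⟩

end Dominates

def firstHits (E : V → V → Prop) (W : Set V) (u : V) : Set V :=
  {d ∈ W | ReachAvoiding E (W \ {d}) u d}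

section FirstHits

variable {W A : Set V} {u : V}

theorem firstHits_subset : firstHits E W u ⊆ W := fun _ hd => hd.1

theorem dominates_firstHits (hAW : A ⊆ W) (hu : u ∉ A) (hA : Dominates E root A {u}) :
    Dominates E root A (firstHits E W u) := by
  rw [dominates_iff] at hA ⊢
  rintro x ⟨-, hux⟩ hxA hxr
  exact hA u rfl hu ((hux.mono (Set.subset_sdiff_singleton hAW hxA)).trans hxr)

theorem firstHits_dominates (hW : Dominates E root W {u}) :
    Dominates E root (firstHits E W u) {u} := by
  rw [dominates_iff] at hW ⊢
  intro b hb hbF hr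
  subst b
  rcases hr.exists_first_hit W with h | ⟨d, hdW, hdF, hud, -⟩
  · exact hW u rfl (fun huW => hbF ⟨huW, Relation.ReflTransGen.refl⟩)
      (h.mono Set.subset_union_right)
  · exact hdF ⟨hdW, hud.mono (Set.sdiff_subset_sdiff_left Set.subset_union_right)⟩

theorem exists_mem_firstHits_ne {a : V} (hW : Dominates E root W {u})
    (ha : ¬ Dominates E root {a} {u}) : ∃ d ∈ firstHits E W u, d ≠ a := by
  rw [dominates_iff] at hW ha
  push Not at ha
  obtain ⟨b, hb, hua, hr⟩ := ha
  subst b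
  rcases hr.exists_first_hit W with h | ⟨d, hdW, hda, hud, -⟩
  · by_cases huW : u ∈ W
    · exact ⟨u, ⟨huW, Relation.ReflTransGen.refl⟩, hua⟩
    · exact absurd (h.mono Set.subset_union_right) (hW u rfl huW)
  · exact ⟨d, ⟨hdW, hud.mono (Set.sdiff_subset_sdiff_left Set.subset_union_right)⟩, hda⟩

end FirstHits

theorem Set.ncard_inter_pair_le_one {α : Type*} {s : Set α} {a b : α} (h : ¬ {a, b} ⊆ s) :
    (s ∩ {a, b}).ncard ≤ 1 := by
  have hlt := Set.ncard_lt_ncard (ssubset_of_subset_not_superset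
    Set.inter_subset_right fun h' => h (h'.trans Set.inter_subset_left)) (Set.toFinite {a, b})
  have := Set.ncard_insert_le a {b}
  rw [Set.ncard_singleton] at this
  omega

namespace DoubleDom

variable {u v w s t : V}

theorem symm (h : DoubleDom E root u v w) : DoubleDom E root u w v :=
  ⟨h.1.symm, Set.pair_comm v w ▸ h.2.1, h.2.2.2, h.2.2.1⟩

theorem not_mem (h : DoubleDom E root u v w) : u ∉ ({v, w} : Set V) := by
  rintro (rfl | rfl)
  exacts [h.2.2.1 (dominates_of_subset subset_rfl), h.2.2.2 (dominates_of_subset subset_rfl)]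

theorem not_dominates_of_mem {d : V} (h : DoubleDom E root u v w) (hd : d ∈ ({v, w} : Set V)) :
    ¬ Dominates E root {d} {u} := by
  rcases hd with rfl | rfl
  exacts [h.2.2.1, h.2.2.2]

theorem exists_dominated {v₁ w₁ v₂ w₂ : V}
    (h₁ : DoubleDom E root u v₁ w₁) (h₂ : DoubleDom E root u v₂ w₂) :
    ∃ a b, DoubleDom E root u a b ∧ Dominates E root {v₁, w₁} {a, b} ∧
      Dominates E root {v₂, w₂} {a, b} := by
  set F := firstHits E ({v₁, w₁} ∪ {v₂, w₂}) u
  have hF₁ : Dominates E root {v₁, w₁} F :=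
    dominates_firstHits Set.subset_union_left h₁.not_mem h₁.2.1
  have hF₂ : Dominates E root {v₂, w₂} F :=
    dominates_firstHits Set.subset_union_right h₂.not_mem h₂.2.1
  by_cases hc₁ : {v₁, w₁} ⊆ F
  · exact ⟨v₁, w₁, h₁, dominates_of_subset subset_rfl, hF₂.mono_right hc₁⟩
  by_cases hc₂ : {v₂, w₂} ⊆ F
  · exact ⟨v₂, w₂, h₂, hF₁.mono_right hc₂, dominates_of_subset subset_rfl⟩
  have hW : Dominates E root ({v₁, w₁} ∪ {v₂, w₂}) {u} := h₁.2.1.mono_left Set.subset_union_left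
  have hsingle : ∀ d ∈ F, ¬ Dominates E root {d} {u} := fun d hd =>
    (firstHits_subset hd).elim h₁.not_dominates_of_mem h₂.not_dominates_of_mem
  obtain ⟨a, ha, -⟩ := exists_mem_firstHits_ne hW h₁.2.2.1
  obtain ⟨b, hb, hba⟩ := exists_mem_firstHits_ne hW (hsingle a ha)
  have hcard : F.ncard ≤ 2 := calc
    F.ncard = (F ∩ {v₁, w₁} ∪ F ∩ {v₂, w₂}).ncard := by
      rw [← Set.inter_union_distrib_left, Set.inter_eq_left.2 firstHits_subset]
    _ ≤ (F ∩ {v₁, w₁}).ncard + (F ∩ {v₂, w₂}).ncard := Set.ncard_union_le _ _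
    _ ≤ 1 + 1 := add_le_add (Set.ncard_inter_pair_le_one hc₁) (Set.ncard_inter_pair_le_one hc₂)
  have hFab : {a, b} = F := Set.eq_of_subset_of_ncard_le (Set.pair_subset ha hb)
    (by rwa [Set.ncard_pair hba.symm]) ((Set.toFinite _).subset firstHits_subset)
  exact ⟨a, b, ⟨hba.symm, hFab ▸ firstHits_dominates hW, hsingle a ha, hsingle b hb⟩,
    hFab ▸ hF₁, hFab ▸ hF₂⟩

theorem mem_of_dominates (hacyc : Acyclic E) {P : Set V} (hQ : DoubleDom E root u s t)
    (hQP : Dominates E root {s, t} P) (hPs : Dominates E root P {s}) : s ∈ P := by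
  by_contra hsP
  have hts : ¬ Dominates E root {t} {s} := fun h =>
    hQ.2.2.2 ((h.insert (dominates_of_subset subset_rfl)).trans hQ.2.1)
  rw [dominates_iff] at hts hQP hPs
  push Not at hts
  obtain ⟨x, hx, -, hr⟩ := hts
  subst x
  rcases (hr.insert_self hacyc).exists_first_hit P with h | ⟨e, heP, heQ, -, he⟩
  · exact hPs s rfl hsP (h.mono Set.subset_union_right)
  · exact hQP e heP heQ he

theorem subset_of_dominates (hacyc : Acyclic E) {P : Set V} (hQ : DoubleDom E root u s t)
    (hQP : Dominates E root {s, t} P) (hPQ : Dominates E root P {s, t}) :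
    ({s, t} : Set V) ⊆ P :=
  Set.pair_subset
    (hQ.mem_of_dominates hacyc hQP (hPQ.mono_right (by simp)))
    (hQ.symm.mem_of_dominates hacyc (Set.pair_comm s t ▸ hQP) (hPQ.mono_right (by simp)))

end DoubleDom

end

theorem immediate_doubleDom_unique {V : Type*} [Fintype V] (E : V → V → Prop) (root : V)
    (hacyc : Acyclic E) (u : V) (hne : ∃ v w, DoubleDom E root u v w) :
    ∃! D : Set V, (∃ v w, D = {v, w} ∧ DoubleDom E root u v w) ∧
      ∀ v' w', DoubleDom E root u v' w' → Dominates E root {v', w'} D := by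
  obtain ⟨v, w, hvw⟩ := hne
  have : Nonempty {p : V × V // DoubleDom E root u p.1 p.2} := ⟨⟨(v, w), hvw⟩⟩
  have hdir : Directed (Dominates E root)
      fun p : {p : V × V // DoubleDom E root u p.1 p.2} => ({p.1.1, p.1.2} : Set V) := by
    rintro ⟨⟨v₁, w₁⟩, h₁⟩ ⟨⟨v₂, w₂⟩, h₂⟩
    obtain ⟨a, b, hab, hd₁, hd₂⟩ := h₁.exists_dominated h₂
    exact ⟨⟨(a, b), hab⟩, hd₁, hd₂⟩
  obtain ⟨⟨⟨a, b⟩, hab⟩, hmin⟩ := hdir.finite_le id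
  refine ⟨{a, b}, ⟨⟨a, b, rfl, hab⟩, fun v' w' h => hmin ⟨(v', w'), h⟩⟩, ?_⟩
  rintro D ⟨⟨x, y, rfl, hxy⟩, hD⟩
  exact (hxy.subset_of_dominates hacyc (hmin ⟨(x, y), hxy⟩) (hD a b hab)).antisymm
    (hab.subset_of_dominates hacyc (hD a b hab) (hmin ⟨(x, y), hxy⟩))
end

section
/- Cross-path exclusion: Let P1 = (v1 = u, ..., v_m = root) and P2 = (w1 = u, ..., w_n = root) be two internally vertex-disjoint paths from u to root. If there is a path P3 from v_i ∈ P1 to w_j ∈ P2 whose only common vertices with P1 ∪ P2 are v_i and w_j, then for all k with i < k ≤ m and all l with 1 ≤ l < j, the pair {v_k, w_l} is not a double-vertex dominator of u. -/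
/-!
If `{v_k, w_l}` dominated `u`, the path that follows `P1` from `u` to `v_i`, crosses to `w_j`
along `P3` and follows `P2` on to `root` would meet `v_k` or `w_l`. It meets neither: by
acyclicity `P1` and `P2` repeat no vertex, so the `P1`-part stops before `v_k` and the `P2`-part
starts after `w_l`; `P3` meets `P1 ∪ P2` only at its ends; and `v_k`, `w_l` lie on only one of
`P1`, `P2` because the shared vertices `u` and `root` dominate `u` on their own.
-/

section

variable {V : Type*} {E : V → V → Prop} {root : V}

theorem Acyclic.irrefl_transGen (hE : Acyclic E) (a : V) : ¬ Relation.TransGen E a a := by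
  intro h
  obtain ⟨b, hab, hba⟩ := Relation.TransGen.head'_iff.1 h
  exact hE a b hab hba

theorem Acyclic.nodup_of_isChain (hE : Acyclic E) {p : List V} (hp : p.IsChain E) :
    p.Nodup := by
  refine (hp.imp fun _ _ => Relation.TransGen.single).pairwise.imp ?_
  rintro x _ hxy rfl
  exact hE.irrefl_transGen x hxy

theorem List.Nodup.getElem_notMem_take {α : Type*} {l : List α} (hl : l.Nodup) {n k : ℕ}
    (hk : k < l.length) (hnk : n ≤ k) : l[k] ∉ l.take n := by
  intro hmem
  obtain ⟨m, hm, he⟩ := List.mem_take_iff_getElem.1 hmem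
  have := hl.getElem_inj_iff.1 he
  omega

theorem List.Nodup.getElem_notMem_drop {α : Type*} {l : List α} (hl : l.Nodup) {n k : ℕ}
    (hk : k < l.length) (hkn : k < n) : l[k] ∉ l.drop n := by
  intro hmem
  obtain ⟨m, hm, he⟩ := List.mem_drop_iff_getElem.1 hmem
  have := hl.getElem_inj_iff.1 he
  omega

namespace IsPath

variable {p q : List V} {a b c : V}

theorem head_mem (h : IsPath E p a b) : a ∈ p := List.mem_of_mem_head? h.2.1

theorem last_mem (h : IsPath E p a b) : b ∈ p := List.mem_of_mem_getLast? h.2.2.1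

theorem nodup (hE : Acyclic E) (h : IsPath E p a b) : p.Nodup := hE.nodup_of_isChain h.2.2.2

theorem take_succ (h : IsPath E p a b) (i : Fin p.length) :
    IsPath E (p.take (i + 1)) a (p.get i) := by
  obtain ⟨hne, hhead, -, hchain⟩ := h
  refine ⟨by simp [hne], by simp [List.head?_take, hhead], ?_, hchain.take _⟩
  simp [List.getLast?_take]

theorem drop (h : IsPath E p a b) (j : Fin p.length) :
    IsPath E (p.drop j) (p.get j) b := by
  obtain ⟨-, -, hlast, hchain⟩ := h
  refine ⟨by simp, by simp [List.head?_drop], ?_, hchain.drop _⟩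
  simp [List.getLast?_drop, hlast]

theorem append_tail (hp : IsPath E p a b) (hq : IsPath E q b c) :
    IsPath E (p ++ q.tail) a c := by
  obtain ⟨hpne, hphead, hplast, hpchain⟩ := hp
  obtain ⟨q, rfl⟩ : ∃ q', q = b :: q' := by
    obtain ⟨-, hqhead, -, -⟩ := hq
    cases q with
    | nil => simp at hqhead
    | cons x q' => simp_all
  obtain ⟨-, -, hqlast, hqchain⟩ := hq
  cases q with
  | nil => simpa [← Option.some_inj.1 hqlast] using ⟨hpne, hphead, hplast, hpchain⟩
  | cons y r =>
    obtain ⟨hby, hqchain⟩ := List.isChain_cons_cons.1 hqchain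
    refine ⟨by simp [hpne], by simp [List.head?_append, hphead], ?_,
      hpchain.append hqchain ?_⟩
    · simpa [List.getLast?_append] using hqlast
    · simp only [hplast, List.tail_cons, List.head?_cons, Option.mem_def, Option.some_inj]
      rintro _ rfl _ rfl
      exact hby

end IsPath

theorem dominates_singleton_self (u : V) : Dominates E root {u} {u} := by
  rintro _ rfl q hq
  exact ⟨_, rfl, hq.head_mem⟩

theorem dominates_singleton_root (B : Set V) : Dominates E root {root} B :=
  fun _ _ _ hq => ⟨_, rfl, hq.last_mem⟩

theorem ne_of_not_dominates_singleton {u x : V} (h : ¬ Dominates E root {x} {u}) :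
    x ≠ u ∧ x ≠ root :=
  ⟨by rintro rfl; exact h (dominates_singleton_self x),
    by rintro rfl; exact h (dominates_singleton_root _)⟩

theorem not_dominates_pair_of_isPath {u v w : V} {q : List V} (hq : IsPath E q u root)
    (hv : v ∉ q) (hw : w ∉ q) : ¬ Dominates E root {v, w} {u} := by
  intro h
  obtain ⟨x, hx | hx, hxq⟩ := h u rfl q hq <;> subst hx <;> contradiction

end

theorem cross_path_exclusion_general {V : Type*} (E : V → V → Prop) (root : V)
    (hacyc : Acyclic E) (u : V) (p₁ p₂ : List V)
    (h₁ : IsPath E p₁ u root) (h₂ : IsPath E p₂ u root)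
    (hdisj : ∀ x, x ∈ p₁ → x ∈ p₂ → x = u ∨ x = root)
    (i : Fin p₁.length) (j : Fin p₂.length) (p₃ : List V)
    (h₃ : IsPath E p₃ (p₁.get i) (p₂.get j))
    (h₃disj : ∀ x ∈ p₃, (x ∈ p₁ ∨ x ∈ p₂) → x = p₁.get i ∨ x = p₂.get j) :
    ∀ (k : Fin p₁.length) (l : Fin p₂.length), i < k → l < j →
      ¬ DoubleDom E root u (p₁.get k) (p₂.get l) := by
  rintro k l hik hlj ⟨-, hdom, hv, hw⟩
  have hn₁ := h₁.nodup hacyc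
  have hn₂ := h₂.nodup hacyc
  have hv₂ : p₁.get k ∉ p₂ := fun hm =>
    (hdisj _ (p₁.get_mem k) hm).elim (ne_of_not_dominates_singleton hv).1
      (ne_of_not_dominates_singleton hv).2
  have hw₁ : p₂.get l ∉ p₁ := fun hm =>
    (hdisj _ hm (p₂.get_mem l)).elim (ne_of_not_dominates_singleton hw).1
      (ne_of_not_dominates_singleton hw).2
  have hbypass : IsPath E (p₁.take (i + 1) ++ p₃.tail ++ (p₂.drop j).tail) u root :=
    ((h₁.take_succ i).append_tail h₃).append_tail (h₂.drop j)
  refine not_dominates_pair_of_isPath hbypass ?_ ?_ hdom <;>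
    simp only [List.mem_append, List.tail_drop, not_or]
  · refine ⟨⟨hn₁.getElem_notMem_take k.isLt hik, fun hm => ?_⟩,
      fun hm => hv₂ (List.mem_of_mem_drop hm)⟩
    rcases h₃disj _ (List.mem_of_mem_tail hm) (.inl (p₁.get_mem k)) with he | he
    · exact hik.ne' (hn₁.get_inj_iff.1 he)
    · exact hv₂ (he ▸ p₂.get_mem j)
  · refine ⟨⟨fun hm => hw₁ (List.mem_of_mem_take hm), fun hm => ?_⟩,
      hn₂.getElem_notMem_drop l.isLt (by omega)⟩
    rcases h₃disj _ (List.mem_of_mem_tail hm) (.inr (p₂.get_mem l)) with he | he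
    · exact hw₁ (he ▸ p₁.get_mem i)
    · exact hlj.ne (hn₂.get_inj_iff.1 he)

theorem cross_path_exclusion {V : Type*} [Fintype V] (E : V → V → Prop) (root : V)
    (hacyc : Acyclic E) (u : V) (p₁ p₂ : List V)
    (h₁ : IsPath E p₁ u root) (h₂ : IsPath E p₂ u root)
    (hdisj : ∀ x, x ∈ p₁ → x ∈ p₂ → x = u ∨ x = root)
    (i : Fin p₁.length) (j : Fin p₂.length) (p₃ : List V)
    (h₃ : IsPath E p₃ (p₁.get i) (p₂.get j))
    (h₃disj : ∀ x ∈ p₃, (x ∈ p₁ ∨ x ∈ p₂) → x = p₁.get i ∨ x = p₂.get j) :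
    ∀ (k : Fin p₁.length) (l : Fin p₂.length), i < k → l < j →
      ¬ DoubleDom E root u (p₁.get k) (p₂.get l) :=
  cross_path_exclusion_general E root hacyc u p₁ p₂ h₁ h₂ hdisj i j p₃ h₃ h₃disj
end
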